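/- arXiv:0905.3434 — 2 statements merged into one kernel-verified Lean document; each statement's English description precedes it below -/
import Mathlib

section
/- Fix an integer K ≥ 2; for each user k ∈ {2,…,K} let G_k be an m×m complex Hermitian positive semidefinite matrix (the received covariance H_{k1}S_kH_{k1}ᴴ of user k's signal at user 1's receiver) and r_k ≥ 0 a real rate. If 𝒰 and 𝒰' are both decodable user sets for user 1, then 𝒰 ∪ 𝒰' is also a decodable user set for user 1. -/
/-!
Write `logDetGain N S = lndet(1 + N + S) - lndet(1 + N)` for the rate that a signal of covariance
`S` supports over noise of covariance `1 + N`. With `b = √S` it equals `lndet(1 + b (1 + N)⁻¹ b)`,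
so, inversion being operator antitone, it decreases when PSD noise is added to `N`
(submodularity of `lndet`). Split `J ⊆ 𝒰 ∪ 𝒰'` into `J \ 𝒰 ⊆ 𝒰'` and `J ∩ 𝒰 ⊆ 𝒰`. By the chain
rule, the gain of `J` over the noise from outside `𝒰 ∪ 𝒰'` is the gain of `J \ 𝒰` over that noise
plus the gain of `J ∩ 𝒰` over that noise together with `J \ 𝒰`. Both noises are parts of the noises
in the decodability conditions for `𝒰'` and `𝒰`, so each gain dominates the corresponding sum
of rates.
-/

open Matrix
open scoped ComplexOrder

/-- Definition 4.1: a subset 𝒰 ⊆ {2,…,K} is a decodable user set for user 1 if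
for every nonempty 𝒥 ⊆ 𝒰 the sum rate of 𝒥 does not exceed the corresponding
MAC constraint, treating the users outside 𝒰 as colored Gaussian noise. -/
def IsDecodableUserSet {m : ℕ} (K : ℕ) (G : ℕ → Matrix (Fin m) (Fin m) ℂ)
    (r : ℕ → ℝ) (U : Finset ℕ) : Prop :=
  U ⊆ Finset.Icc 2 K ∧
  ∀ J ⊆ U, J.Nonempty →
    ∑ i ∈ J, r i ≤
      Real.log ((1 + (∑ k ∈ Finset.Icc 2 K \ U, G k) + ∑ i ∈ J, G i).det.re) -
        Real.log ((1 + ∑ k ∈ Finset.Icc 2 K \ U, G k).det.re)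

namespace Matrix

variable {n : Type*} [Fintype n] [DecidableEq n]

open scoped MatrixOrder

theorem PosSemidef.one_le_det_one_add {F : Matrix n n ℂ} (hF : F.PosSemidef) :
    1 ≤ (1 + F).det := by
  have hH : (1 + F).IsHermitian := isHermitian_one.add hF.1
  have h1 : algebraMap ℝ (Matrix n n ℂ) 1 ≤ 1 + F := by
    simpa [Matrix.le_iff] using hF
  rw [algebraMap_le_iff_le_spectrum hH.isSelfAdjoint] at h1
  rw [hH.det_eq_prod_eigenvalues]
  exact Finset.one_le_prod fun i _ ↦ by
    simpa using Complex.real_le_real.mpr (h1 _ (hH.eigenvalues_mem_spectrum_real i))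

open scoped Matrix.Norms.L2Operator in
theorem PosDef.posSemidef_inv_sub_inv_add {P D : Matrix n n ℂ} (hP : P.PosDef)
    (hD : D.PosSemidef) : (P⁻¹ - (P + D)⁻¹).PosSemidef := by
  have := CStarAlgebra.ringInverse_le_ringInverse (le_add_of_nonneg_right hD.nonneg)
    hP.isStrictlyPositive
  simpa [nonsing_inv_eq_ringInverse, Matrix.le_iff] using this

theorem PosDef.det_add_eq {P E : Matrix n n ℂ} (hP : P.PosDef) (hE : E.PosSemidef) :
    (P + E).det = P.det * (1 + CFC.sqrt E * P⁻¹ * CFC.sqrt E).det := by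
  have hinv : P * P⁻¹ = 1 := mul_nonsing_inv P (isUnit_iff_isUnit_det P |>.mp hP.isUnit)
  calc (P + E).det = (P * (1 + P⁻¹ * CFC.sqrt E * CFC.sqrt E)).det := by
        rw [mul_assoc, CFC.sqrt_mul_sqrt_self E hE.nonneg, Matrix.mul_add, ← Matrix.mul_assoc,
          hinv, Matrix.mul_one, Matrix.one_mul]
    _ = P.det * (1 + CFC.sqrt E * P⁻¹ * CFC.sqrt E).det := by
        rw [det_mul, det_one_add_mul_comm, Matrix.mul_assoc]

theorem PosSemidef.sqrt_mul_mul_sqrt {X : Matrix n n ℂ} (hX : X.PosSemidef) (E : Matrix n n ℂ) :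
    (CFC.sqrt E * X * CFC.sqrt E).PosSemidef :=
  (conjugate_nonneg_of_nonneg hX.nonneg (CFC.sqrt_nonneg E)).posSemidef

theorem PosDef.det_le_det_add {P E : Matrix n n ℂ} (hP : P.PosDef) (hE : E.PosSemidef) :
    P.det ≤ (P + E).det := by
  rw [hP.det_add_eq hE]
  exact le_mul_of_one_le_right hP.det_pos.le
    (hP.inv.posSemidef.sqrt_mul_mul_sqrt E).one_le_det_one_add

theorem PosDef.det_add_add_mul_det_le {P B D : Matrix n n ℂ} (hP : P.PosDef)
    (hB : B.PosSemidef) (hD : D.PosSemidef) :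
    (P + D + B).det * P.det ≤ (P + B).det * (P + D).det := by
  have hPD : (P + D).PosDef := hP.add_posSemidef hD
  set b := CFC.sqrt B
  have hle : (1 + b * (P + D)⁻¹ * b).det ≤ (1 + b * P⁻¹ * b).det := by
    have hsplit : 1 + b * P⁻¹ * b = 1 + b * (P + D)⁻¹ * b + b * (P⁻¹ - (P + D)⁻¹) * b := by
      rw [Matrix.mul_sub, Matrix.sub_mul]; abel
    rw [hsplit]
    exact (PosDef.one.add_posSemidef (hPD.inv.posSemidef.sqrt_mul_mul_sqrt B)).det_le_det_add
      ((hP.posSemidef_inv_sub_inv_add hD).sqrt_mul_mul_sqrt B)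
  rw [hPD.det_add_eq hB, hP.det_add_eq hB]
  calc (P + D).det * (1 + b * (P + D)⁻¹ * b).det * P.det
      = (P.det * (P + D).det) * (1 + b * (P + D)⁻¹ * b).det := by ring
    _ ≤ (P.det * (P + D).det) * (1 + b * P⁻¹ * b).det :=
        mul_le_mul_of_nonneg_left hle (mul_pos hP.det_pos hPD.det_pos).le
    _ = P.det * (1 + b * P⁻¹ * b).det * (P + D).det := by ring

theorem PosDef.log_re_det_add_add_sub_le {P B D : Matrix n n ℂ} (hP : P.PosDef)
    (hB : B.PosSemidef) (hD : D.PosSemidef) :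
    Real.log (P + D + B).det.re - Real.log (P + D).det.re ≤
      Real.log (P + B).det.re - Real.log P.det.re := by
  have hreal : ∀ {Q : Matrix n n ℂ}, Q.PosDef → 0 < Q.det.re ∧ (Q.det.re : ℂ) = Q.det :=
    fun hQ ↦ ⟨(Complex.pos_iff.mp hQ.det_pos).1,
      Complex.ext rfl (Complex.pos_iff.mp hQ.det_pos).2⟩
  have hPD := hP.add_posSemidef hD
  obtain ⟨h₁, e₁⟩ := hreal (hPD.add_posSemidef hB)
  obtain ⟨h₂, e₂⟩ := hreal hPD
  obtain ⟨h₃, e₃⟩ := hreal (hP.add_posSemidef hB)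
  obtain ⟨h₄, e₄⟩ := hreal hP
  have key := hP.det_add_add_mul_det_le hB hD
  rw [← e₁, ← e₂, ← e₃, ← e₄] at key
  have hlog := Real.log_le_log (mul_pos h₁ h₄) (Complex.real_le_real.mp (by exact_mod_cast key))
  rw [Real.log_mul h₁.ne' h₄.ne', Real.log_mul h₃.ne' h₂.ne'] at hlog
  linarith

end Matrix

noncomputable def logDetGain {n : Type*} [Fintype n] [DecidableEq n] (N S : Matrix n n ℂ) : ℝ :=
  Real.log (1 + N + S).det.re - Real.log (1 + N).det.re

section logDetGain

variable {n : Type*} [Fintype n] [DecidableEq n]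

@[simp]
theorem logDetGain_zero_right (N : Matrix n n ℂ) : logDetGain N 0 = 0 := by
  simp [logDetGain]

theorem logDetGain_add_right (N S T : Matrix n n ℂ) :
    logDetGain N (S + T) = logDetGain N S + logDetGain (N + S) T := by
  simp only [logDetGain, ← add_assoc]
  ring

theorem logDetGain_add_left_le {N D S : Matrix n n ℂ} (hN : N.PosSemidef) (hD : D.PosSemidef)
    (hS : S.PosSemidef) : logDetGain (N + D) S ≤ logDetGain N S := by
  simpa only [logDetGain, ← add_assoc] using
    (PosDef.one.add_posSemidef hN).log_re_det_add_add_sub_le hS hD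

end logDetGain

open Finset

theorem IsDecodableUserSet.sum_le_logDetGain {m K : ℕ} {G : ℕ → Matrix (Fin m) (Fin m) ℂ}
    {r : ℕ → ℝ} {U J S : Finset ℕ} (hG : ∀ k ∈ Icc 2 K, (G k).PosSemidef)
    (hU : IsDecodableUserSet K G r U) (hJ : J ⊆ U) (hS : S ⊆ Icc 2 K \ U) :
    ∑ i ∈ J, r i ≤ logDetGain (∑ k ∈ S, G k) (∑ i ∈ J, G i) := by
  have hpsd : ∀ s ⊆ Icc 2 K, (∑ k ∈ s, G k).PosSemidef :=
    fun s hs ↦ posSemidef_sum s fun k hk ↦ hG k (hs hk)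
  rcases J.eq_empty_or_nonempty with rfl | hne
  · simp
  have hnoise : ∑ k ∈ Icc 2 K \ U, G k = ∑ k ∈ S, G k + ∑ k ∈ (Icc 2 K \ U) \ S, G k := by
    rw [add_comm, sum_sdiff hS]
  calc ∑ i ∈ J, r i ≤ logDetGain (∑ k ∈ Icc 2 K \ U, G k) (∑ i ∈ J, G i) := hU.2 J hJ hne
    _ ≤ logDetGain (∑ k ∈ S, G k) (∑ i ∈ J, G i) := by
      rw [hnoise]
      exact logDetGain_add_left_le (hpsd _ (hS.trans sdiff_subset))
        (hpsd _ (sdiff_subset.trans sdiff_subset)) (hpsd _ (hJ.trans hU.1))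

theorem union_decodable_general {m : ℕ} (K : ℕ)
    (G : ℕ → Matrix (Fin m) (Fin m) ℂ) (r : ℕ → ℝ)
    (hG : ∀ k ∈ Finset.Icc 2 K, (G k).PosSemidef)
    (U U' : Finset ℕ)
    (hU : IsDecodableUserSet K G r U) (hU' : IsDecodableUserSet K G r U') :
    IsDecodableUserSet K G r (U ∪ U') := by
  refine ⟨union_subset hU.1 hU'.1, fun J hJ _ ↦ ?_⟩
  set N := Icc 2 K \ (U ∪ U')
  have hJU' : J \ U ⊆ U' := sdiff_le_iff.mpr hJ
  have hNU' : N ⊆ Icc 2 K \ U' := sdiff_subset_sdiff le_rfl subset_union_right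
  have hNU : N ∪ J \ U ⊆ Icc 2 K \ U := union_subset (sdiff_subset_sdiff le_rfl subset_union_left)
    (sdiff_subset_sdiff (hJ.trans (union_subset hU.1 hU'.1)) le_rfl)
  have h₂ := hU'.sum_le_logDetGain hG hJU' hNU'
  have h₁ := hU.sum_le_logDetGain hG (inter_subset_right (s₁ := J)) hNU
  rw [sum_union (sdiff_disjoint.mono_right (sdiff_subset.trans hJ))] at h₁
  show ∑ i ∈ J, r i ≤ logDetGain (∑ k ∈ N, G k) (∑ i ∈ J, G i)
  rw [← sum_inter_add_sum_sdiff J U r, ← sum_inter_add_sum_sdiff J U G,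
    add_comm (∑ i ∈ J ∩ U, G i), logDetGain_add_right]
  linarith

/-- the union of two decodable user sets for user 1 is again a
decodable user set for user 1. -/
theorem union_decodable {m : ℕ} (K : ℕ) (hK : 2 ≤ K)
    (G : ℕ → Matrix (Fin m) (Fin m) ℂ) (r : ℕ → ℝ)
    (hG : ∀ k ∈ Finset.Icc 2 K, (G k).PosSemidef) (hr : ∀ k, 0 ≤ r k)
    (U U' : Finset ℕ)
    (hU : IsDecodableUserSet K G r U) (hU' : IsDecodableUserSet K G r U') :
    IsDecodableUserSet K G r (U ∪ U') :=
  union_decodable_general K G r hG U U' hU hU'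
end

section
/- Fix an integer K ≥ 2; for each user k ∈ {2,…,K} let G_k be an m×m complex Hermitian positive semidefinite matrix and r_k ≥ 0 a real rate. Suppose 𝒰 is a decodable user set for user 1 and 𝒰 ⊆ 𝒱 ⊆ {2,…,K}. Then for every nonempty subset 𝒲 ⊆ 𝒰: Σ_{i∈𝒲} r_i ≤ lndet( I + N_𝒱 + Σ_{i∈𝒲} G_i ) − lndet( I + N_𝒱 ), where N_𝒱 := Σ_{k∈{2,…,K}∖𝒱} G_k. That is, the decodability inequalities remain valid when the background noise is reduced to that of any superset 𝒱 of 𝒰; this is the property underlying the iterative shrinking algorithm for finding the optimal decodable user set. -/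
open Matrix
open scoped ComplexOrder

/-! The noise seen when decoding `𝒰` is `N + D`, where `N = 1 + N_𝒱` and `D = Σ_{k ∈ 𝒱 ∖ 𝒰} G_k`,
so it suffices that `log det` has diminishing returns:
`log det (N + D + S) - log det (N + D) ≤ log det (N + S) - log det N` for `N ≻ 0`, `D, S ⪰ 0`.
Writing `S = C * C`, the two sides are `log det (1 + C M⁻¹ C)` for `M = N + D` and `M = N`, and this
decreases in `M` because inversion is antitone and `det` is monotone in the Loewner order. -/

namespace Matrix

variable {n : Type*} [Fintype n] [DecidableEq n]

open scoped MatrixOrder Matrix.Norms.L2Operator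

lemma PosDef.inv_le_inv_of_le {A B : Matrix n n ℂ} (hA : A.PosDef) (hAB : A ≤ B) :
    B⁻¹ ≤ A⁻¹ := by
  rw [nonsing_inv_eq_ringInverse, nonsing_inv_eq_ringInverse]
  exact CStarAlgebra.ringInverse_le_ringInverse hAB (isStrictlyPositive_iff_posDef.mpr hA)

lemma PosSemidef.one_le_det_one_add_s13 {X : Matrix n n ℂ} (hX : X.PosSemidef) :
    1 ≤ (1 + X).det := by
  have hH : (1 + X).IsHermitian := isHermitian_one.add hX.1
  have hspec : ∀ x ∈ spectrum ℝ (1 + X), 1 ≤ x :=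
    (CFC.one_le_iff (1 + X) hH.isSelfAdjoint).mp (le_add_of_nonneg_right hX.nonneg)
  have hprod : (1 : ℝ) ≤ ∏ i, hH.eigenvalues i :=
    Finset.one_le_prod fun i _ => hspec _ (hH.eigenvalues_mem_spectrum_real i)
  rw [hH.det_eq_prod_eigenvalues, ← RCLike.ofReal_prod, ← RCLike.ofReal_one]
  exact RCLike.ofReal_le_ofReal.mpr hprod

lemma PosDef.isUnit_det {A : Matrix n n ℂ} (hA : A.PosDef) : IsUnit A.det :=
  isUnit_iff_ne_zero.mpr hA.det_pos.ne'

lemma PosDef.posSemidef_mul_inv_mul {A C : Matrix n n ℂ} (hA : A.PosDef) (hC : C.IsHermitian) :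
    (C * A⁻¹ * C).PosSemidef := by
  simpa [hC.eq] using hA.inv.posSemidef.mul_mul_conjTranspose_same C

lemma PosDef.det_le_det_of_le {A B : Matrix n n ℂ} (hA : A.PosDef) (hAB : A ≤ B) :
    A.det ≤ B.det := by
  set C := CFC.sqrt (B - A)
  have hC : C.IsHermitian := (CFC.sqrt_nonneg (B - A)).posSemidef.1
  have hB : B = A + C * C := by rw [CFC.sqrt_mul_sqrt_self (B - A) (sub_nonneg.mpr hAB)]; abel
  rw [hB, det_add_mul C C hA.isUnit_det]
  exact le_mul_of_one_le_right hA.det_pos.le (hA.posSemidef_mul_inv_mul hC).one_le_det_one_add_s13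

lemma PosDef.det_add_add_mul_det_le_s13 {N D S : Matrix n n ℂ} (hN : N.PosDef) (hD : D.PosSemidef)
    (hS : S.PosSemidef) : (N + D + S).det * N.det ≤ (N + S).det * (N + D).det := by
  set C := CFC.sqrt S
  have hC : C.IsHermitian := (CFC.sqrt_nonneg S).posSemidef.1
  have hSC : S = C * C := (CFC.sqrt_mul_sqrt_self S hS.nonneg).symm
  have hND : (N + D).PosDef := hN.add_posSemidef hD
  have hgain : (1 + C * (N + D)⁻¹ * C).det ≤ (1 + C * N⁻¹ * C).det := by
    refine (PosDef.one.add_posSemidef (hND.posSemidef_mul_inv_mul hC)).det_le_det_of_le ?_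
    have hinv := hN.inv_le_inv_of_le (le_add_of_nonneg_right hD.nonneg)
    have hconj := star_left_conjugate_le_conjugate hinv C
    rw [star_eq_conjTranspose, hC.eq] at hconj
    exact add_le_add_right hconj 1
  calc (N + D + S).det * N.det = (N + D).det * N.det * (1 + C * (N + D)⁻¹ * C).det := by
        rw [hSC, det_add_mul C C hND.isUnit_det]; ring
    _ ≤ (N + D).det * N.det * (1 + C * N⁻¹ * C).det :=
        mul_le_mul_of_nonneg_left hgain (mul_nonneg hND.det_pos.le hN.det_pos.le)
    _ = (N + S).det * (N + D).det := by rw [hSC, det_add_mul C C hN.isUnit_det]; ring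

lemma PosDef.ofReal_re_det {A : Matrix n n ℂ} (hA : A.PosDef) : ((A.det.re : ℝ) : ℂ) = A.det :=
  (Complex.eq_re_of_ofReal_le (r := 0) (by simpa using hA.det_pos.le)).symm

lemma PosDef.re_det_pos {A : Matrix n n ℂ} (hA : A.PosDef) : 0 < A.det.re :=
  (Complex.lt_def.mp hA.det_pos).1

lemma PosDef.log_re_det_add_add_sub_le_s13 {N D S : Matrix n n ℂ} (hN : N.PosDef) (hD : D.PosSemidef)
    (hS : S.PosSemidef) :
    Real.log (N + D + S).det.re - Real.log (N + D).det.re ≤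
      Real.log (N + S).det.re - Real.log N.det.re := by
  have hND := hN.add_posSemidef hD
  have hNDS := hND.add_posSemidef hS
  have hNS := hN.add_posSemidef hS
  have h := hN.det_add_add_mul_det_le_s13 hD hS
  rw [← hN.ofReal_re_det, ← hND.ofReal_re_det, ← hNDS.ofReal_re_det, ← hNS.ofReal_re_det]
    at h
  have hR : (N + D + S).det.re * N.det.re ≤ (N + S).det.re * (N + D).det.re := by
    exact_mod_cast h
  have hlog := Real.log_le_log (mul_pos hNDS.re_det_pos hN.re_det_pos) hR
  rw [Real.log_mul hNDS.re_det_pos.ne' hN.re_det_pos.ne',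
    Real.log_mul hNS.re_det_pos.ne' hND.re_det_pos.ne'] at hlog
  linarith

end Matrix

theorem decodable_with_reduced_noise_general {m : ℕ} (K : ℕ)
    (G : ℕ → Matrix (Fin m) (Fin m) ℂ) (r : ℕ → ℝ)
    (hG : ∀ k ∈ Finset.Icc 2 K, (G k).PosSemidef)
    (U V : Finset ℕ) (hU : IsDecodableUserSet K G r U)
    (hUV : U ⊆ V) (hV : V ⊆ Finset.Icc 2 K) :
    ∀ W ⊆ U, W.Nonempty →
      ∑ i ∈ W, r i ≤
        Real.log ((1 + (∑ k ∈ Finset.Icc 2 K \ V, G k) + ∑ i ∈ W, G i).det.re) -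
          Real.log ((1 + ∑ k ∈ Finset.Icc 2 K \ V, G k).det.re) := by
  intro W hWU hW
  have hsum : ∀ s ⊆ Finset.Icc 2 K, (∑ k ∈ s, G k).PosSemidef := fun s hs =>
    posSemidef_sum s fun k hk => hG k (hs hk)
  have hsplit : ∑ k ∈ Finset.Icc 2 K \ U, G k =
      (∑ k ∈ Finset.Icc 2 K \ V, G k) + ∑ k ∈ V \ U, G k := by
    rw [← Finset.sum_union (Finset.sdiff_disjoint.mono_right Finset.sdiff_subset),
      Finset.sdiff_union_sdiff_cancel hV hUV]
  have hdec := hU.2 W hWU hW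
  rw [hsplit, ← add_assoc] at hdec
  have hN : (1 + ∑ k ∈ Finset.Icc 2 K \ V, G k).PosDef :=
    PosDef.one.add_posSemidef (hsum _ Finset.sdiff_subset)
  have hgain := hN.log_re_det_add_add_sub_le_s13 (hsum (V \ U) (Finset.sdiff_subset.trans hV))
    (hsum W (hWU.trans (hUV.trans hV)))
  linarith

/-- if 𝒰 is a decodable user set for user 1 and 𝒰 ⊆ 𝒱 ⊆ {2,…,K},
then the decodability inequalities for subsets of 𝒰 remain valid when the
background noise is reduced to N_𝒱 = Σ_{k ∉ 𝒱} G_k. -/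
theorem decodable_with_reduced_noise {m : ℕ} (K : ℕ) (hK : 2 ≤ K)
    (G : ℕ → Matrix (Fin m) (Fin m) ℂ) (r : ℕ → ℝ)
    (hG : ∀ k ∈ Finset.Icc 2 K, (G k).PosSemidef) (hr : ∀ k, 0 ≤ r k)
    (U V : Finset ℕ) (hU : IsDecodableUserSet K G r U)
    (hUV : U ⊆ V) (hV : V ⊆ Finset.Icc 2 K) :
    ∀ W ⊆ U, W.Nonempty →
      ∑ i ∈ W, r i ≤
        Real.log ((1 + (∑ k ∈ Finset.Icc 2 K \ V, G k) + ∑ i ∈ W, G i).det.re) -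
          Real.log ((1 + ∑ k ∈ Finset.Icc 2 K \ V, G k).det.re) :=
  decodable_with_reduced_noise_general K G r hG U V hU hUV hV
end
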